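/- arXiv:2302.11601 — 4 statements merged into one kernel-verified Lean document; each statement's English description precedes it below -/
import Mathlib

section
/- Let r > 0, let S = {π/2 + 2πk : k ∈ ℤ}, let P_θ ∈ [0, 2π), let δ = infDist(P_θ, S), and let P_y, G_y ∈ ℝ satisfy G_y ≥ P_y + r·sin δ. Then there exists a function θ : ℝ → ℝ that is Lipschitz continuous with constant 1/r, satisfies θ(0) = P_θ, and satisfies P_y + ∫₀^{s_f} sin(θ(t)) dt = G_y for s_f = r·δ + (G_y − P_y − r·sin δ). -/
/-!
Let `c ∈ upSet` be a heading nearest to `P_θ`, so `δ = |c - P_θ| ≤ π`. Turn from `P_θ` towards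
`c` at the maximal rate `1/r` for arc length `r δ`, then keep heading `c` (straight up). Since
`sin c = 1`, along the arc `sin θ(t) = cos (δ - t / r)`, which integrates to `r sin δ`; the
straight segment of length `G_y - P_y - r sin δ ≥ 0` climbs the remaining height.
-/

open Real

/-- The set of "straight up" headings `π/2 + 2πk`, `k ∈ ℤ`. -/
def upSet : Set ℝ := {x : ℝ | ∃ k : ℤ, x = Real.pi / 2 + 2 * Real.pi * k}

theorem Metric.infDist_eq_dist_of_forall_dist_le {α : Type*} [PseudoMetricSpace α]
    {s : Set α} {x c : α} (hc : c ∈ s) (h : ∀ y ∈ s, dist x c ≤ dist x y) :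
    Metric.infDist x s = dist x c :=
  le_antisymm (Metric.infDist_le_dist_of_mem hc) ((Metric.le_infDist ⟨c, hc⟩).2 h)

theorem sin_eq_one_of_mem_upSet {c : ℝ} (hc : c ∈ upSet) : sin c = 1 := by
  obtain ⟨k, rfl⟩ := hc
  rw [mul_comm, sin_add_int_mul_two_pi, sin_pi_div_two]

theorem exists_mem_upSet_abs_sub_le_pi (x : ℝ) : ∃ c ∈ upSet, |c - x| ≤ π := by
  set k := round ((x - π / 2) / (2 * π))
  refine ⟨π / 2 + 2 * π * k, ⟨k, rfl⟩, ?_⟩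
  have hround := abs_sub_round ((x - π / 2) / (2 * π))
  have h : π / 2 + 2 * π * k - x = -(2 * π) * ((x - π / 2) / (2 * π) - k) := by
    field_simp; ring
  rw [h, abs_mul, abs_neg, abs_of_pos two_pi_pos]
  nlinarith [pi_pos]

theorem two_pi_le_abs_sub_of_mem_upSet {a b : ℝ} (ha : a ∈ upSet) (hb : b ∈ upSet)
    (hab : a ≠ b) : 2 * π ≤ |a - b| := by
  obtain ⟨k, rfl⟩ := ha
  obtain ⟨j, rfl⟩ := hb
  have hkj : k - j ≠ 0 := sub_ne_zero.2 fun h => hab (by rw [h])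
  have h1 : (1 : ℝ) ≤ |((k - j : ℤ) : ℝ)| := by
    exact_mod_cast Int.one_le_abs hkj
  have h : π / 2 + 2 * π * k - (π / 2 + 2 * π * j) = 2 * π * ((k - j : ℤ) : ℝ) := by
    push_cast; ring
  rw [h, abs_mul, abs_of_pos two_pi_pos]
  nlinarith [pi_pos]

theorem infDist_upSet_eq {c x : ℝ} (hc : c ∈ upSet) (hcx : |c - x| ≤ π) :
    Metric.infDist x upSet = |c - x| := by
  have hnearest : ∀ y ∈ upSet, dist x c ≤ dist x y := by
    intro y hy
    rcases eq_or_ne y c with rfl | hyc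
    · exact le_rfl
    have hgap := two_pi_le_abs_sub_of_mem_upSet hy hc hyc
    rw [Real.dist_eq, Real.dist_eq, abs_sub_comm x c, abs_sub_comm x y]
    linarith [abs_sub_le y x c, abs_sub_comm x c]
  rw [Metric.infDist_eq_dist_of_forall_dist_le hc hnearest, Real.dist_eq, abs_sub_comm]

/-- Heading of the CS path: turn from `P` towards `c` at rate `1/r`, then hold heading `c`. -/
noncomputable def csHeading (r P c t : ℝ) : ℝ :=
  c - SignType.sign (c - P) * max (|c - P| - t / r) 0

theorem csHeading_zero (r P c : ℝ) : csHeading r P c 0 = P := by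
  simp [csHeading]

theorem lipschitzWith_csHeading {r : ℝ} (hr : 0 < r) (P c : ℝ) :
    LipschitzWith (1 / r).toNNReal (csHeading r P c) := by
  refine LipschitzWith.of_dist_le_mul fun a b => ?_
  have hsign : |(SignType.sign (c - P) : ℝ)| ≤ 1 := by
    rcases SignType.sign (c - P) with _ | _ | _ <;> simp
  have hmax : |max (|c - P| - b / r) 0 - max (|c - P| - a / r) 0| ≤ 1 / r * |a - b| := by
    refine (abs_max_sub_max_le_abs _ _ _).trans (le_of_eq ?_)
    rw [show |c - P| - b / r - (|c - P| - a / r) = 1 / r * (a - b) by ring, abs_mul,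
      abs_of_pos (one_div_pos.2 hr)]
  rw [Real.coe_toNNReal _ (one_div_pos.2 hr).le, Real.dist_eq, Real.dist_eq, csHeading,
    csHeading, sub_sub_sub_cancel_left, ← mul_sub, abs_mul]
  calc _ ≤ 1 * (1 / r * |a - b|) := by gcongr
    _ = _ := one_mul _

theorem cos_eq_zero_of_sin_eq_one {c : ℝ} (hc : sin c = 1) : cos c = 0 := by
  nlinarith [sin_sq_add_cos_sq c]

theorem sin_csHeading {r : ℝ} (hr : 0 < r) {P c t : ℝ} (hc : sin c = 1) (ht : 0 ≤ t) :
    sin (csHeading r P c t) = cos (max (|c - P| - t / r) 0) := by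
  rw [csHeading, sin_sub, hc, cos_eq_zero_of_sin_eq_one hc, one_mul, zero_mul, sub_zero]
  rcases lt_trichotomy (c - P) 0 with h | h | h
  · simp [sign_neg h]
  · simp [h, max_eq_right (neg_nonpos.2 (div_nonneg ht hr.le))]
  · simp [sign_pos h]

theorem integral_cos_max_sub_div {r : ℝ} (hr : 0 < r) {δ L : ℝ} (hδ : 0 ≤ δ) (hL : 0 ≤ L) :
    ∫ t in (0 : ℝ)..r * δ + L, cos (max (δ - t / r) 0) = r * sin δ + L := by
  have hcont : Continuous fun t => cos (max (δ - t / r) 0) := by fun_prop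
  have hint := hcont.intervalIntegrable (μ := MeasureTheory.volume)
  rw [← intervalIntegral.integral_add_adjacent_intervals (hint 0 (r * δ)) (hint _ _)]
  have harc : ∫ t in (0 : ℝ)..r * δ, cos (max (δ - t / r) 0) = r * sin δ := by
    rw [intervalIntegral.integral_congr (g := fun t => cos (δ - t / r)) fun t ht => ?_,
      intervalIntegral.integral_comp_sub_div _ hr.ne', integral_cos]
    · simp [hr.ne']
    · rw [Set.uIcc_of_le (by positivity)] at ht
      rw [max_eq_left (sub_nonneg.2 ((div_le_iff₀ hr).2 (by linarith [ht.2])))]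
  have hline : ∫ t in r * δ..r * δ + L, cos (max (δ - t / r) 0) = L := by
    rw [intervalIntegral.integral_congr (g := fun _ => 1) fun t ht => ?_]
    · simp
    · rw [Set.uIcc_of_le (by linarith)] at ht
      rw [max_eq_right (sub_nonpos.2 ((le_div_iff₀ hr).2 (by linarith [ht.1]))), cos_zero]
  rw [harc, hline]

theorem integral_sin_csHeading {r : ℝ} (hr : 0 < r) {P c L : ℝ} (hc : sin c = 1) (hL : 0 ≤ L) :
    ∫ t in (0 : ℝ)..r * |c - P| + L, sin (csHeading r P c t) = r * sin |c - P| + L := by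
  have hrδ : 0 ≤ r * |c - P| := by positivity
  rw [intervalIntegral.integral_congr (g := fun t => cos (max (|c - P| - t / r) 0))
    fun t ht => sin_csHeading hr hc ?_]
  · exact integral_cos_max_sub_div hr (abs_nonneg _) hL
  · rw [Set.uIcc_of_le (by linarith)] at ht
    exact ht.1

theorem stmt_1_general (r : ℝ) (hr : 0 < r) (P_θ : ℝ)
    (P_y G_y : ℝ)
    (hG : G_y ≥ P_y + r * Real.sin (Metric.infDist P_θ upSet)) :
    ∃ θ : ℝ → ℝ, LipschitzWith (Real.toNNReal (1 / r)) θ ∧ θ 0 = P_θ ∧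
      P_y + (∫ t in (0:ℝ)..(r * Metric.infDist P_θ upSet +
          (G_y - P_y - r * Real.sin (Metric.infDist P_θ upSet))), Real.sin (θ t)) = G_y := by
  obtain ⟨c, hc, hcP⟩ := exists_mem_upSet_abs_sub_le_pi P_θ
  rw [infDist_upSet_eq hc hcP] at hG ⊢
  refine ⟨csHeading r P_θ c, lipschitzWith_csHeading hr P_θ c, csHeading_zero r P_θ c, ?_⟩
  rw [integral_sin_csHeading hr (sin_eq_one_of_mem_upSet hc) (by linarith)]
  ring

theorem stmt_1 (r : ℝ) (hr : 0 < r) (P_θ : ℝ)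
    (hPθ : P_θ ∈ Set.Ico (0 : ℝ) (2 * Real.pi))
    (P_y G_y : ℝ)
    (hG : G_y ≥ P_y + r * Real.sin (Metric.infDist P_θ upSet)) :
    ∃ θ : ℝ → ℝ, LipschitzWith (Real.toNNReal (1 / r)) θ ∧ θ 0 = P_θ ∧
      P_y + (∫ t in (0:ℝ)..(r * Metric.infDist P_θ upSet +
          (G_y - P_y - r * Real.sin (Metric.infDist P_θ upSet))), Real.sin (θ t)) = G_y :=
  stmt_1_general r hr P_θ P_y G_y hG
end

section
/- Let r > 0, let θ : ℝ → ℝ be Lipschitz continuous with Lipschitz constant 1/r, let P_θ = θ(0) ∈ [π/2, π], let P_y, G_y ∈ ℝ, and set o_y = P_y − r·cos(P_θ). If G_y ≥ o_y, then for every s_f ≥ 0 with P_y + ∫₀^{s_f} sin(θ(t)) dt ≥ G_y, one has s_f ≥ r·(P_θ − π/2) + (G_y − o_y). -/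
/-!
While its heading is still above `π / 2`, the path climbs no faster than the minimum-radius arc
turning clockwise at rate `1 / r` from the same heading, because `sin` is decreasing on
`[π / 2, 3π / 2]`. That arc reaches heading `π / 2` after arc length `r (θ(0) - π / 2)`, at the top
`o_y` of the turning circle, and after that the climb rate is at most `1`. A path stopping before
the arc reaches heading `π / 2` is therefore still strictly below `o_y ≤ G_y`.
-/

open Real Set

lemma sin_le_sin_of_pi_div_two_le {a φ : ℝ} (ha : π / 2 ≤ a) (haφ : a ≤ φ)
    (hφ : φ ≤ π + π / 2) : sin φ ≤ sin a := by
  rw [← sin_pi_sub φ, ← sin_pi_sub a]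
  exact sin_le_sin_of_le_of_le_pi_div_two (by linarith) (by linarith) (by linarith)

lemma integral_sin_sub_div {r : ℝ} (hr : r ≠ 0) (φ b : ℝ) :
    ∫ t in (0 : ℝ)..b, sin (φ - t / r) = r * cos (φ - b / r) - r * cos φ := by
  rw [intervalIntegral.integral_comp_sub_div _ hr, integral_sin, smul_eq_mul, zero_div, sub_zero,
    mul_sub]

lemma LipschitzWith.abs_sub_le_div {r : ℝ} (hr : 0 ≤ r) {θ : ℝ → ℝ}
    (hθ : LipschitzWith (1 / r).toNNReal θ) (s t : ℝ) : |θ t - θ s| ≤ |t - s| / r := by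
  have := hθ.dist_le_mul t s
  rwa [Real.dist_eq, Real.dist_eq, Real.coe_toNNReal _ (by positivity), one_div_mul_eq_div] at this

section Turning

variable {r : ℝ} (hr : 0 < r) {θ : ℝ → ℝ} (hθ : LipschitzWith (1 / r).toNNReal θ)
include hr hθ

lemma integral_sin_le_of_le_turn (hθπ : θ 0 ≤ π) {s : ℝ} (hs : 0 ≤ s)
    (hsT : s ≤ r * (θ 0 - π / 2)) :
    ∫ t in (0 : ℝ)..s, sin (θ t) ≤ r * cos (θ 0 - s / r) - r * cos (θ 0) := by
  rw [← integral_sin_sub_div hr.ne']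
  refine intervalIntegral.integral_mono_on hs
    ((continuous_sin.comp hθ.continuous).intervalIntegrable _ _)
    ((by fun_prop : Continuous fun t => sin (θ 0 - t / r)).intervalIntegrable _ _)
    fun t ⟨ht0, hts⟩ => ?_
  have hlip := abs_le.mp (hθ.abs_sub_le_div hr.le 0 t)
  rw [sub_zero, abs_of_nonneg ht0] at hlip
  have htT : t / r ≤ θ 0 - π / 2 := by rw [div_le_iff₀ hr]; linarith
  exact sin_le_sin_of_pi_div_two_le (by linarith) (by linarith) (by linarith)

lemma integral_sin_le_of_turn_le (hθ0 : θ 0 ∈ Icc (π / 2) π) {s : ℝ}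
    (hTs : r * (θ 0 - π / 2) ≤ s) :
    ∫ t in (0 : ℝ)..s, sin (θ t) ≤ s - r * (θ 0 - π / 2) - r * cos (θ 0) := by
  set T := r * (θ 0 - π / 2)
  have hT : 0 ≤ T := mul_nonneg hr.le (by linarith [hθ0.1])
  have hint (a b : ℝ) : IntervalIntegrable (fun t => sin (θ t)) MeasureTheory.volume a b :=
    (continuous_sin.comp hθ.continuous).intervalIntegrable a b
  have hturn : ∫ t in (0 : ℝ)..T, sin (θ t) ≤ -(r * cos (θ 0)) := by
    have := integral_sin_le_of_le_turn hr hθ hθ0.2 hT le_rfl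
    rwa [show θ 0 - T / r = π / 2 by field_simp; ring, cos_pi_div_two, mul_zero, zero_sub] at this
  have hrest : ∫ t in T..s, sin (θ t) ≤ s - T := by
    simpa using intervalIntegral.integral_mono_on hTs (hint T s) intervalIntegrable_const
      fun t _ => sin_le_one (θ t)
  rw [← intervalIntegral.integral_add_adjacent_intervals (hint 0 T) (hint T s)]
  linarith

end Turning

theorem stmt_2 (r : ℝ) (hr : 0 < r) (θ : ℝ → ℝ)
    (hθ : LipschitzWith (Real.toNNReal (1 / r)) θ)
    (hPθ : θ 0 ∈ Set.Icc (Real.pi / 2) Real.pi)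
    (P_y G_y : ℝ)
    (hG : G_y ≥ P_y - r * Real.cos (θ 0)) :
    ∀ s_f : ℝ, 0 ≤ s_f →
      P_y + ∫ t in (0:ℝ)..s_f, Real.sin (θ t) ≥ G_y →
      s_f ≥ r * (θ 0 - Real.pi / 2) + (G_y - (P_y - r * Real.cos (θ 0))) := by
  intro s_f hs hreach
  rcases lt_or_ge s_f (r * (θ 0 - π / 2)) with hshort | hlong
  · have hturn := integral_sin_le_of_le_turn hr hθ hPθ.2 hs hshort.le
    have hsr : 0 ≤ s_f / r := div_nonneg hs hr.le
    have hcos : cos (θ 0 - s_f / r) < 0 := by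
      have : s_f / r < θ 0 - π / 2 := by rw [div_lt_iff₀ hr]; linarith
      exact cos_neg_of_pi_div_two_lt_of_lt (by linarith) (by linarith [hPθ.2])
    linarith [mul_neg_of_pos_of_neg hr hcos]
  · linarith [integral_sin_le_of_turn_le hr hθ hPθ hlong]
end

section
/- Let r > 0, P_θ ∈ [π/2, π], P_y, G_y ∈ ℝ, and set o_y = P_y − r·cos(P_θ). If P_y ≤ G_y < o_y, then the heading function θ(s) = P_θ − s/r (which is Lipschitz with constant 1/r) satisfies P_y + ∫₀^{s_f} sin(θ(t)) dt = G_y for s_f = r·(P_θ − π + arccos((o_y − G_y)/r)), and s_f ≥ 0. -/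
open Real

lemma lipschitzWith_const_sub_div (a : ℝ) {r : ℝ} (hr : 0 ≤ r) :
    LipschitzWith (1 / r).toNNReal (fun s : ℝ => a - s / r) := by
  refine LipschitzWith.of_dist_le_mul fun s t => ?_
  rw [Real.coe_toNNReal _ (by positivity), Real.dist_eq, Real.dist_eq,
    show a - s / r - (a - t / r) = 1 / r * (t - s) by ring, abs_mul,
    abs_of_nonneg (by positivity), abs_sub_comm]

lemma integral_sin_const_sub_div (a s : ℝ) {r : ℝ} (hr : r ≠ 0) :
    ∫ t in (0 : ℝ)..s, sin (a - t / r) = r * (cos (a - s / r) - cos a) := by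
  have h := intervalIntegral.inv_mul_integral_comp_sub_div (f := sin) (a := 0) (b := s)
    (c := r) (d := a)
  rw [integral_sin, zero_div, sub_zero, inv_mul_eq_iff_eq_mul₀ hr] at h
  exact h

lemma pi_sub_le_arccos {θ x : ℝ} (hθ : θ ∈ Set.Icc 0 π) (hx : x ≤ -cos θ) :
    π - θ ≤ arccos x := by
  have hθ' : π - θ ∈ Set.Icc 0 π := ⟨by linarith [hθ.2], by linarith [hθ.1]⟩
  calc π - θ = arccos (cos (π - θ)) := (arccos_cos hθ'.1 hθ'.2).symm
    _ = arccos (-cos θ) := by rw [cos_pi_sub]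
    _ ≤ arccos x := arccos_le_arccos hx

theorem stmt_4 (r : ℝ) (hr : 0 < r) (P_θ : ℝ)
    (hPθ : P_θ ∈ Set.Icc (Real.pi / 2) Real.pi)
    (P_y G_y : ℝ)
    (hG1 : P_y ≤ G_y) (hG2 : G_y < P_y - r * Real.cos P_θ) :
    LipschitzWith (Real.toNNReal (1 / r)) (fun s : ℝ => P_θ - s / r) ∧
    P_y + (∫ t in (0:ℝ)..(r * (P_θ - Real.pi +
        Real.arccos (((P_y - r * Real.cos P_θ) - G_y) / r))),
        Real.sin (P_θ - t / r)) = G_y ∧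
    0 ≤ r * (P_θ - Real.pi +
        Real.arccos (((P_y - r * Real.cos P_θ) - G_y) / r)) := by
  set x := ((P_y - r * cos P_θ) - G_y) / r with hx
  have hrx : r * x = (P_y - r * cos P_θ) - G_y := by rw [hx]; field_simp
  have hx_le : x ≤ -cos P_θ := by nlinarith
  have hx_mem : x ∈ Set.Icc (-1) 1 :=
    ⟨by nlinarith, hx_le.trans (neg_le.mp (neg_one_le_cos P_θ))⟩
  have hθ : P_θ ∈ Set.Icc 0 π := ⟨by linarith [pi_pos, hPθ.1], hPθ.2⟩
  refine ⟨lipschitzWith_const_sub_div P_θ hr.le, ?_,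
    mul_nonneg hr.le (by linarith [pi_sub_le_arccos hθ hx_le])⟩
  have hend : P_θ - r * (P_θ - π + arccos x) / r = π - arccos x := by field_simp; ring
  rw [integral_sin_const_sub_div _ _ hr.ne', hend, cos_pi_sub, cos_arccos hx_mem.1 hx_mem.2]
  linarith
end

section
/- Let r > 0, a ≥ 0, and P_θ ∈ ℝ, and define f(θ) = r·(P_θ − θ) + (a − r·cos θ)/sin θ for θ ∈ (0, π). Then for every θ ∈ (0, π) with r·cos θ ≤ a, f(θ) ≥ f(π/2) = r·(P_θ − π/2) + a. -/
open Real

/-!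
With `t = π/2 - θ` the claim `f θ ≥ f (π/2)` becomes `(a - r t) sin θ ≤ a - r cos θ`.
For `θ ≤ π/2` this follows from `cos θ = sin t ≤ t` and `0 ≤ a - r cos θ`, `sin θ ≤ 1`;
for `θ ≥ π/2` from `cos θ ≤ t sin θ`, i.e. `s cos s ≤ sin s` for `s = -t`, which is `s ≤ tan s`.
-/

namespace Real

theorem mul_cos_le_sin {x : ℝ} (h0 : 0 ≤ x) (hπ : x ≤ π) : x * cos x ≤ sin x := by
  rcases lt_or_ge x (π / 2) with hx | hx
  · have hcos : 0 < cos x := cos_pos_of_mem_Ioo ⟨by linarith, hx⟩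
    have htan := le_tan h0 hx
    rwa [tan_eq_sin_div_cos, le_div_iff₀ hcos] at htan
  · have hcos : cos x ≤ 0 := cos_nonpos_of_pi_div_two_le_of_le hx (by linarith)
    nlinarith [sin_nonneg_of_nonneg_of_le_pi h0 hπ]

theorem cos_le_pi_div_two_sub {θ : ℝ} (h : θ ≤ π / 2) : cos θ ≤ π / 2 - θ := by
  simpa only [sin_pi_div_two_sub] using sin_le (x := π / 2 - θ) (by linarith)

theorem cos_le_pi_div_two_sub_mul_sin {θ : ℝ} (h : π / 2 ≤ θ) (hπ : θ ≤ 3 * π / 2) :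
    cos θ ≤ (π / 2 - θ) * sin θ := by
  have := mul_cos_le_sin (x := θ - π / 2) (by linarith) (by linarith)
  rw [cos_sub_pi_div_two, sin_sub_pi_div_two] at this
  linarith

end Real

theorem sub_mul_pi_div_two_sub_mul_sin_le {r a θ : ℝ} (hr : 0 ≤ r) (ha : 0 ≤ a)
    (hθ : θ ∈ Set.Icc 0 π) (hra : r * cos θ ≤ a) :
    (a - r * (π / 2 - θ)) * sin θ ≤ a - r * cos θ := by
  have hsin0 : 0 ≤ sin θ := sin_nonneg_of_nonneg_of_le_pi hθ.1 hθ.2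
  have hsin1 : sin θ ≤ 1 := sin_le_one θ
  rcases le_total θ (π / 2) with h | h
  · have hcos := mul_le_mul_of_nonneg_left (cos_le_pi_div_two_sub h) hr
    calc (a - r * (π / 2 - θ)) * sin θ ≤ (a - r * cos θ) * sin θ := by gcongr
      _ ≤ a - r * cos θ := mul_le_of_le_one_right (by linarith) hsin1
  · have hcos := mul_le_mul_of_nonneg_left
      (cos_le_pi_div_two_sub_mul_sin h (by linarith [hθ.2, pi_pos])) hr
    nlinarith [mul_le_of_le_one_right ha hsin1]

theorem stmt_11 (r a P_θ : ℝ) (hr : 0 < r) (ha : 0 ≤ a) :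
    (∀ φ ∈ Set.Ioo (0 : ℝ) Real.pi, r * Real.cos φ ≤ a →
      r * (P_θ - φ) + (a - r * Real.cos φ) / Real.sin φ ≥
        r * (P_θ - Real.pi / 2) +
          (a - r * Real.cos (Real.pi / 2)) / Real.sin (Real.pi / 2)) ∧
    r * (P_θ - Real.pi / 2) +
        (a - r * Real.cos (Real.pi / 2)) / Real.sin (Real.pi / 2) =
      r * (P_θ - Real.pi / 2) + a := by
  have hf : r * (P_θ - π / 2) + (a - r * cos (π / 2)) / sin (π / 2) = r * (P_θ - π / 2) + a := by
    simp only [cos_pi_div_two, sin_pi_div_two]; ring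
  refine ⟨fun φ hφ hra => ?_, hf⟩
  have hsin : 0 < sin φ := sin_pos_of_pos_of_lt_pi hφ.1 hφ.2
  have key : a - r * (π / 2 - φ) ≤ (a - r * cos φ) / sin φ :=
    (le_div_iff₀ hsin).2 (sub_mul_pi_div_two_sub_mul_sin_le hr.le ha (Set.Ioo_subset_Icc_self hφ) hra)
  rw [hf]
  linarith
end
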